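/- Let n ≥ 3 be an integer and let h₁, …, hₙ be real numbers such that the gradient of g₁ at (h₁,…,hₙ) is collinear with (1,1,…,1), i.e., all n partial derivatives of g₁ at (h₁,…,hₙ) are equal to a common value λ. Then there exists a real number a with h₂ = h₃ = ⋯ = hₙ = a and h₁ = 2a; moreover, at such a point, g₁ = ((n+1)(n−2)/2) · a². -/

import Mathlib

open Finset

/-- The quadratic form `g₁(h₁,…,hₙ) = Σ_{1≤i<j≤n} hᵢhⱼ − (1/(n−1))·h₁·Σ_{j=2}^{n} hⱼ
− Σ_{j=2}^{n} hⱼ² + (1/(n−1))·Σ_{j=2}^{n} hⱼ²` (0-based: `h₁ = h 0`,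
`Σ_{j=2}^{n}` is the sum over indices `j` with `1 ≤ j`). -/
noncomputable def gOne (n : ℕ) (hn : 3 ≤ n) (h : Fin n → ℝ) : ℝ :=
  (∑ i : Fin n, ∑ j : Fin n, if i < j then h i * h j else 0)
    - (1 / ((n : ℝ) - 1)) * h ⟨0, by omega⟩ * (∑ j : Fin n, if 1 ≤ (j : ℕ) then h j else 0)
    - (∑ j : Fin n, if 1 ≤ (j : ℕ) then h j ^ 2 else 0)
    + (1 / ((n : ℝ) - 1)) * (∑ j : Fin n, if 1 ≤ (j : ℕ) then h j ^ 2 else 0)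

lemma key_sum (n : ℕ) (f : Fin n → ℝ) (i : Fin n) :
    (∑ j : Fin n, if j ≠ i then f j else 0) = (∑ j : Fin n, f j) - f i := by
  have h1 : (∑ j : Fin n, if j = i then f j else 0) = f i := by
    simp
  have h2 : ∀ j : Fin n, (if j ≠ i then f j else 0) = f j - (if j = i then f j else 0) := by
    intro j; by_cases hji : j = i <;> simp [hji]
  rw [Finset.sum_congr rfl (fun j _ => h2 j), Finset.sum_sub_distrib, h1]

lemma double_sum (n : ℕ) (f : Fin n → ℝ) :
    2 * (∑ i : Fin n, ∑ j : Fin n, if i < j then f i * f j else 0)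
      = (∑ i : Fin n, f i) ^ 2 - ∑ i : Fin n, f i ^ 2 := by
  have hsq : (∑ i : Fin n, f i) ^ 2 = ∑ i : Fin n, ∑ j : Fin n, f i * f j := by
    rw [sq, Finset.sum_mul_sum]
  have hsplit : ∀ i j : Fin n, f i * f j =
      (if i < j then f i * f j else 0) + (if j < i then f i * f j else 0)
        + (if i = j then f i * f j else 0) := by
    intro i j
    rcases lt_trichotomy i j with hij | hij | hij
    · simp [hij, lt_asymm hij, ne_of_lt hij]
    · simp [hij, lt_irrefl]
    · simp [hij, lt_asymm hij, (ne_of_lt hij).symm]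
  have hmid : (∑ i : Fin n, ∑ j : Fin n, if j < i then f i * f j else 0)
      = ∑ i : Fin n, ∑ j : Fin n, if i < j then f i * f j else 0 := by
    rw [Finset.sum_comm]
    refine Finset.sum_congr rfl fun i _ => Finset.sum_congr rfl fun j _ => ?_
    by_cases hij : i < j <;> simp [hij, mul_comm]
  have hdiag : (∑ i : Fin n, ∑ j : Fin n, if i = j then f i * f j else 0)
      = ∑ i : Fin n, f i ^ 2 := by
    refine Finset.sum_congr rfl fun i _ => ?_
    simp [sq, eq_comm]
  have : (∑ i : Fin n, ∑ j : Fin n, f i * f j)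
      = (∑ i : Fin n, ∑ j : Fin n, if i < j then f i * f j else 0)
        + (∑ i : Fin n, ∑ j : Fin n, if j < i then f i * f j else 0)
        + (∑ i : Fin n, ∑ j : Fin n, if i = j then f i * f j else 0) := by
    rw [← Finset.sum_add_distrib, ← Finset.sum_add_distrib]
    refine Finset.sum_congr rfl fun i _ => ?_
    rw [← Finset.sum_add_distrib, ← Finset.sum_add_distrib]
    exact Finset.sum_congr rfl fun j _ => hsplit i j
  rw [hsq, this, hmid, hdiag]; ring

theorem stmt_8 (n : ℕ) (hn : 3 ≤ n) (h : Fin n → ℝ) (lam : ℝ)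
    (grad1 : (∑ j : Fin n, if 1 ≤ (j : ℕ) then h j else 0)
        - (1 / ((n : ℝ) - 1)) * (∑ j : Fin n, if 1 ≤ (j : ℕ) then h j else 0) = lam)
    (gradi : ∀ i : Fin n, 1 ≤ (i : ℕ) →
        (∑ j : Fin n, if j ≠ i then h j else 0)
          - (1 / ((n : ℝ) - 1)) * h ⟨0, by omega⟩
          - 2 * h i + (2 / ((n : ℝ) - 1)) * h i = lam) :
    ∃ a : ℝ, (∀ i : Fin n, 1 ≤ (i : ℕ) → h i = a) ∧
      h ⟨0, by omega⟩ = 2 * a ∧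
      gOne n hn h = ((n : ℝ) + 1) * ((n : ℝ) - 2) / 2 * a ^ 2 := by
  have hnR : (3 : ℝ) ≤ (n : ℝ) := by exact_mod_cast hn
  have hn1 : (n : ℝ) - 1 ≠ 0 := by linarith
  have hc : (1 / ((n : ℝ) - 1)) * ((n : ℝ) - 1) = 1 := by field_simp
  set z : Fin n := ⟨0, by omega⟩ with hzdef
  set o : Fin n := ⟨1, by omega⟩ with hodef
  set a : ℝ := h o with hadef
  -- all coordinates with index ≥ 1 are equal to a
  have heq : ∀ i : Fin n, 1 ≤ (i : ℕ) → h i = a := by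
    intro i hi
    have e1 := gradi i hi
    have e2 := gradi o (by simp [hodef])
    rw [key_sum] at e1 e2
    have hzero : ((2 : ℝ) / ((n : ℝ) - 1) - 3) * (h i - a) = 0 := by
      linear_combination e1 - e2
    have hfac : ((2 : ℝ) / ((n : ℝ) - 1) - 3) ≠ 0 := by
      have h1 : (2 : ℝ) / ((n : ℝ) - 1) ≤ 1 := by
        rw [div_le_one (by linarith)]; linarith
      intro hcontra; linarith
    have := (mul_eq_zero.mp hzero).resolve_left hfac
    linarith [sub_eq_zero.mp this]
  have hne : ∀ j : Fin n, (1 ≤ (j : ℕ)) ↔ j ≠ z := by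
    intro j
    simp only [ne_eq, hzdef, Fin.ext_iff, Fin.val_mk]
    omega
  -- the conditional sums
  have hS : (∑ j : Fin n, if 1 ≤ (j : ℕ) then h j else 0) = ((n : ℝ) - 1) * a := by
    have step : ∀ j : Fin n, (if 1 ≤ (j : ℕ) then h j else 0) = (if j ≠ z then a else 0) := by
      intro j
      by_cases hj : 1 ≤ (j : ℕ)
      · rw [if_pos hj, if_pos ((hne j).mp hj), heq j hj]
      · rw [if_neg hj, if_neg (fun hb => hj ((hne j).mpr hb))]
    rw [Finset.sum_congr rfl (fun j _ => step j), key_sum n (fun _ => a) z]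
    simp [Finset.card_univ]
    ring
  have hS2 : (∑ j : Fin n, if 1 ≤ (j : ℕ) then h j ^ 2 else 0) = ((n : ℝ) - 1) * a ^ 2 := by
    have step : ∀ j : Fin n, (if 1 ≤ (j : ℕ) then h j ^ 2 else 0) = (if j ≠ z then a ^ 2 else 0) := by
      intro j
      by_cases hj : 1 ≤ (j : ℕ)
      · rw [if_pos hj, if_pos ((hne j).mp hj), heq j hj]
      · rw [if_neg hj, if_neg (fun hb => hj ((hne j).mpr hb))]
    rw [Finset.sum_congr rfl (fun j _ => step j), key_sum n (fun _ => a ^ 2) z]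
    simp [Finset.card_univ]
    ring
  -- total sums
  have hT : (∑ j : Fin n, h j) = h z + ((n : ℝ) - 1) * a := by
    have := key_sum n h z
    have hrw : (∑ j : Fin n, if j ≠ z then h j else 0)
        = ∑ j : Fin n, if 1 ≤ (j : ℕ) then h j else 0 := by
      refine Finset.sum_congr rfl fun j _ => ?_
      by_cases hj : 1 ≤ (j : ℕ)
      · rw [if_pos ((hne j).mp hj), if_pos hj]
      · rw [if_neg (fun hb => hj ((hne j).mpr hb)), if_neg hj]
    rw [hrw, hS] at this
    linarith
  have hT2 : (∑ j : Fin n, h j ^ 2) = h z ^ 2 + ((n : ℝ) - 1) * a ^ 2 := by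
    have := key_sum n (fun j => h j ^ 2) z
    have hrw : (∑ j : Fin n, if j ≠ z then h j ^ 2 else 0)
        = ∑ j : Fin n, if 1 ≤ (j : ℕ) then h j ^ 2 else 0 := by
      refine Finset.sum_congr rfl fun j _ => ?_
      by_cases hj : 1 ≤ (j : ℕ)
      · rw [if_pos ((hne j).mp hj), if_pos hj]
      · rw [if_neg (fun hb => hj ((hne j).mpr hb)), if_neg hj]
    rw [hrw, hS2] at this
    linarith
  -- h z = 2a
  have hz2a : h z = 2 * a := by
    have e2 := gradi o (by simp [hodef])
    rw [key_sum, hT] at e2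
    rw [hS] at grad1
    have hzero : ((1 : ℝ) - 1 / ((n : ℝ) - 1)) * (h z - 2 * a) = 0 := by
      linear_combination e2 - grad1 - a * hc
    have hfac : ((1 : ℝ) - 1 / ((n : ℝ) - 1)) ≠ 0 := by
      have h1 : (1 : ℝ) / ((n : ℝ) - 1) ≤ 1 / 2 := by
        apply div_le_div_of_nonneg_left <;> linarith
      intro hcontra; linarith
    have := (mul_eq_zero.mp hzero).resolve_left hfac
    linarith [sub_eq_zero.mp this]
  refine ⟨a, heq, hz2a, ?_⟩
  unfold gOne
  have hdd := double_sum n h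
  rw [hT, hT2, hz2a] at hdd
  have hD : (∑ i : Fin n, ∑ j : Fin n, if i < j then h i * h j else 0)
      = ((2 * a + ((n : ℝ) - 1) * a) ^ 2 - ((2 * a) ^ 2 + ((n : ℝ) - 1) * a ^ 2)) / 2 := by
    linarith
  rw [hD, hS, hS2]
  show _ - 1 / ((n : ℝ) - 1) * h z * _ - _ + _ = _
  rw [hz2a]
  field_simp
  ring
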